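/- There exists a universal constant C such that for any finite probability space (Ω, μ) with minimal atom probability μ* and any f ∈ L²(Ω^n, μ^n), Var(f) ≤ C·log(1/μ*)·Σ_{i=1}^n ||Δ_i f||₂² / log(||Δ_i f||₂ / ||Δ_i f||₁), where Δ_i f = Σ_{S : i ∈ S} f_S is from the Efron-Stein decomposition (assuming each Δ_i f is nonzero and ||Δ_i f||₂ > ||Δ_i f||₁). -/

import Mathlib

/-!
Write `f = ∑_S f_S` for the Efron–Stein decomposition, so that `Var f = ∑_{S ≠ ∅} ‖f_S‖²` and
`‖Δ_i f‖₂² = ∑_{S ∋ i} ‖f_S‖²`. Charging each `S ≠ ∅` fully to the `i ∈ S` with `|S| ≤ d_i` and by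
`1/(d_i + 1)` to every `i ∈ S` covers `‖f_S‖²`, so `Var f` is at most the sum over `i` of a low part
`∑_{S ∋ i, |S| ≤ d_i} ‖f_S‖²` and a high part `‖Δ_i f‖₂²/(d_i + 1)`.

The low part is `‖u‖₂² = ⟨Δ_i f, u⟩` for `u = ∑_{S ∋ i, |S| ≤ d} f_S`, and Hölder bounds it by
`‖Δ_i f‖₁^{1/2} ‖Δ_i f‖₂^{1/2} ‖u‖₄`. Since `u` is a combination of functions of at most `d`
coordinates, the Bonami-type bound `‖u‖₄⁴ ≤ (16/μ*)^d ‖u‖₂⁴` applies; it is proved by induction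
on the coordinates, splitting `u = E[u | x_{≠j}] + Δ_j u` and bounding `Δ_j u` slice by slice in
`x_j`, each slice costing a factor `1/μ*`. Hence the low part is at most
`(16/μ*)^{d/2} ‖Δ_i f‖₁ ‖Δ_i f‖₂`, and `d_i ≈ log(‖Δ_i f‖₂/‖Δ_i f‖₁) / log(16/μ*)` makes both parts
`O(log(1/μ*) ‖Δ_i f‖₂² / log(‖Δ_i f‖₂/‖Δ_i f‖₁))`.
-/

open Finset

/-- Conditional expectation of `g` given the coordinates in `S`, for the product measure
`μ^{⊗n}` on `Ω^n` (the discrete measure `μ` given by weights `w` summing to `1`). -/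
noncomputable def condExp {n : ℕ} {Ω : Type*} [Fintype Ω]
    (w : Ω → ℝ) (S : Finset (Fin n)) (g : (Fin n → Ω) → ℝ) (x : Fin n → Ω) : ℝ :=
  ∑ y : Fin n → Ω, (∏ i, w (y i)) * g (fun i => if i ∈ S then x i else y i)

lemma Finset.piecewise_piecewise_swap {ι : Type*} {π : ι → Type*} (s : Finset ι)
    [∀ i, Decidable (i ∈ s)] (f g : ∀ i, π i) :
    s.piecewise (s.piecewise f g) (s.piecewise g f) = f := by
  rw [piecewise_piecewise_of_subset_left subset_rfl,
    piecewise_piecewise_of_subset_right subset_rfl, piecewise_same]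

theorem Finset.sum_powerset_neg_one_pow_smul_of_mem {α R M : Type*} [DecidableEq α] [Ring R]
    [AddCommGroup M] [Module R M] {S : Finset α} {i : α} (hi : i ∈ S) (G : Finset α → M) :
    ∑ T ∈ S.powerset, (-1 : R) ^ (#S + #T) • G T =
      ∑ T ∈ (S.erase i).powerset, (-1 : R) ^ (#S + #T) • (G T - G (insert i T)) := by
  rw [← insert_erase hi, sum_powerset_insert (notMem_erase i S), insert_erase hi,
    ← sum_add_distrib]
  refine sum_congr rfl fun T hT => ?_
  have hiT : i ∉ T := fun h => notMem_erase i S (mem_powerset.mp hT h)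
  rw [card_insert_of_notMem hiT, ← add_assoc, pow_succ, smul_sub, sub_eq_add_neg, mul_neg_one,
    neg_smul]

theorem Finset.sum_powerset_sum_powerset_neg_one_pow_smul {α R M : Type*} [DecidableEq α]
    [Ring R] [AddCommGroup M] [Module R M] (A : Finset α) (G : Finset α → M) :
    ∑ S ∈ A.powerset, ∑ T ∈ S.powerset, (-1 : R) ^ (#S + #T) • G T = G A := by
  induction A using Finset.induction_on generalizing G with
  | empty => simp
  | insert a A ha ih =>
    rw [sum_powerset_insert ha, ← ih fun T => G (insert a T), ← sum_add_distrib]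
    refine sum_congr rfl fun S hS => ?_
    have haS : a ∉ S := fun h => ha (mem_powerset.mp hS h)
    rw [sum_powerset_neg_one_pow_smul_of_mem (mem_insert_self a S), erase_insert haS,
      card_insert_of_notMem haS, ← sum_add_distrib]
    refine sum_congr rfl fun T _ => ?_
    rw [add_right_comm, pow_succ, mul_neg_one, neg_smul, smul_sub]
    abel

namespace EfronStein

variable {n : ℕ} {Ω : Type*} {w : Ω → ℝ}

def weight (w : Ω → ℝ) (x : Fin n → Ω) : ℝ := ∏ i, w (x i)

lemma weight_nonneg (hw : ∀ a, 0 ≤ w a) (x : Fin n → Ω) : 0 ≤ weight w x :=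
  prod_nonneg fun i _ => hw (x i)

lemma weight_update (j : Fin n) (a : Ω) (x : Fin n → Ω) :
    w (x j) * weight w (Function.update x j a) = w a * weight w x := by
  simp only [weight, ← mul_prod_erase univ _ (mem_univ j), Function.update_self]
  rw [mul_left_comm]
  congr 2
  exact prod_congr rfl fun i hi => by rw [Function.update_of_ne (ne_of_mem_erase hi)]

section

variable [Fintype Ω]

noncomputable def mean (w : Ω → ℝ) (g : (Fin n → Ω) → ℝ) : ℝ := ∑ x, weight w x * g x

lemma sum_weight (hw1 : ∑ a, w a = 1) : ∑ x : Fin n → Ω, weight w x = 1 := by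
  simp [weight, ← Fintype.prod_sum, hw1]

lemma condExp_eq_sum_piecewise (S : Finset (Fin n)) (g : (Fin n → Ω) → ℝ) (x : Fin n → Ω) :
    condExp w S g x = ∑ y, weight w y * g (S.piecewise x y) := rfl

lemma mean_const (hw1 : ∑ a, w a = 1) (c : ℝ) : mean w (fun _ : Fin n → Ω => c) = c := by
  rw [mean, ← sum_mul, sum_weight hw1, one_mul]

lemma mean_nonneg (hw : ∀ a, 0 ≤ w a) {g : (Fin n → Ω) → ℝ} (hg : 0 ≤ g) : 0 ≤ mean w g :=
  sum_nonneg fun x _ => mul_nonneg (weight_nonneg hw x) (hg x)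

lemma mean_sq_nonneg (hw : ∀ a, 0 ≤ w a) (g : (Fin n → Ω) → ℝ) : 0 ≤ mean w (g ^ 2) :=
  mean_nonneg hw fun x => sq_nonneg (g x)

lemma mean_mono (hw : ∀ a, 0 ≤ w a) {g h : (Fin n → Ω) → ℝ} (hgh : g ≤ h) :
    mean w g ≤ mean w h :=
  sum_le_sum fun x _ => mul_le_mul_of_nonneg_left (hgh x) (weight_nonneg hw x)

lemma mean_add (g h : (Fin n → Ω) → ℝ) : mean w (g + h) = mean w g + mean w h := by
  simp [mean, mul_add, sum_add_distrib]

lemma mean_smul (c : ℝ) (g : (Fin n → Ω) → ℝ) : mean w (c • g) = c * mean w g := by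
  simp [mean, mul_sum, mul_left_comm]

lemma mean_sum {ι : Type*} (s : Finset ι) (g : ι → (Fin n → Ω) → ℝ) :
    mean w (∑ k ∈ s, g k) = ∑ k ∈ s, mean w (g k) := by
  simp only [mean, Finset.sum_apply, mul_sum]
  exact sum_comm

lemma sum_sum_weight_piecewise (S : Finset (Fin n)) (F : (Fin n → Ω) → (Fin n → Ω) → ℝ) :
    ∑ x, ∑ y, weight w x * weight w y * F (S.piecewise x y) (S.piecewise y x) =
      ∑ x, ∑ y, weight w x * weight w y * F x y := by
  let σ : (Fin n → Ω) × (Fin n → Ω) → (Fin n → Ω) × (Fin n → Ω) :=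
    fun p => (S.piecewise p.1 p.2, S.piecewise p.2 p.1)
  have hσ : Function.Involutive σ := by
    rintro ⟨x, y⟩
    ext i <;> by_cases hi : i ∈ S <;> simp [σ, hi]
  have hweight : ∀ x y : Fin n → Ω,
      weight w (S.piecewise x y) * weight w (S.piecewise y x) = weight w x * weight w y := by
    intro x y
    simp only [weight, ← prod_mul_distrib]
    refine prod_congr rfl fun i _ => ?_
    by_cases hi : i ∈ S <;> simp [hi, mul_comm]
  simp only [← Fintype.sum_prod_type']
  exact Fintype.sum_bijective σ hσ.bijective _ _ fun p => by simp only [σ, hweight]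

noncomputable def condExpₗ (w : Ω → ℝ) (S : Finset (Fin n)) :
    ((Fin n → Ω) → ℝ) →ₗ[ℝ] (Fin n → Ω) → ℝ where
  toFun := condExp w S
  map_add' g h := by ext x; simp [condExp, mul_add, sum_add_distrib]
  map_smul' c g := by ext x; simp [condExp, mul_sum, mul_left_comm]

@[simp] lemma condExpₗ_apply (S : Finset (Fin n)) (g : (Fin n → Ω) → ℝ) :
    condExpₗ w S g = condExp w S g := rfl

lemma condExp_sum {ι : Type*} (S : Finset (Fin n)) (s : Finset ι)
    (g : ι → (Fin n → Ω) → ℝ) : condExp w S (∑ k ∈ s, g k) = ∑ k ∈ s, condExp w S (g k) :=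
  map_sum (condExpₗ w S) g s

lemma mean_condExp_mul (S : Finset (Fin n)) (a b : (Fin n → Ω) → ℝ) :
    mean w (condExp w S a * b) = mean w (a * condExp w S b) := calc
  _ = ∑ x, ∑ y, weight w x * weight w y *
        (a (S.piecewise x y) * b (S.piecewise (S.piecewise x y) (S.piecewise y x))) := by
    simp only [mean, Pi.mul_apply, condExp_eq_sum_piecewise, piecewise_piecewise_swap, sum_mul,
      mul_sum]
    exact sum_congr rfl fun x _ => sum_congr rfl fun y _ => by ring
  _ = ∑ x, ∑ y, weight w x * weight w y * (a x * b (S.piecewise x y)) :=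
    sum_sum_weight_piecewise S fun u v => a u * b (S.piecewise u v)
  _ = mean w (a * condExp w S b) := by
    simp only [mean, Pi.mul_apply, condExp_eq_sum_piecewise, mul_sum]
    exact sum_congr rfl fun x _ => sum_congr rfl fun y _ => by ring

lemma condExp_condExp (hw1 : ∑ a, w a = 1) (S T : Finset (Fin n)) (g : (Fin n → Ω) → ℝ) :
    condExp w S (condExp w T g) = condExp w (S ∩ T) g := by
  ext x
  have hpw : ∀ y z : Fin n → Ω,
      T.piecewise (S.piecewise x y) z = (S ∩ T).piecewise x (T.piecewise y z) := by
    intro y z; ext i; by_cases hT : i ∈ T <;> by_cases hS : i ∈ S <;> simp [hT, hS]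
  calc condExp w S (condExp w T g) x
      = ∑ y, ∑ z, weight w y * weight w z * g ((S ∩ T).piecewise x (T.piecewise y z)) := by
        simp only [condExp_eq_sum_piecewise, mul_sum, hpw, mul_assoc]
    _ = ∑ y, ∑ z, weight w y * weight w z * g ((S ∩ T).piecewise x y) :=
        sum_sum_weight_piecewise T fun u _ => g ((S ∩ T).piecewise x u)
    _ = condExp w (S ∩ T) g x := by
        rw [condExp_eq_sum_piecewise]
        refine sum_congr rfl fun y _ => ?_
        rw [← sum_mul, ← mul_sum, sum_weight hw1, mul_one]

lemma _root_.DependsOn.condExp {g : (Fin n → Ω) → ℝ} {A : Set (Fin n)} (hg : DependsOn g A)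
    (S : Finset (Fin n)) : DependsOn (condExp w S g) (↑S ∩ A) := by
  intro x x' hxx'
  simp only [condExp_eq_sum_piecewise]
  refine sum_congr rfl fun y _ => congrArg _ (hg fun i hi => ?_)
  by_cases hS : i ∈ S
  · simp [hS, hxx' i ⟨hS, hi⟩]
  · simp [hS]

lemma dependsOn_condExp (S : Finset (Fin n)) (g : (Fin n → Ω) → ℝ) :
    DependsOn (condExp w S g) S := by
  simpa using (dependsOn_univ g).condExp (w := w) S

lemma condExp_of_dependsOn (hw1 : ∑ a, w a = 1) {S : Finset (Fin n)} {g : (Fin n → Ω) → ℝ}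
    (hg : DependsOn g S) : condExp w S g = g := by
  ext x
  have : ∀ y, g (S.piecewise x y) = g x := fun y => hg fun i hi => piecewise_eq_of_mem _ _ _ hi
  simp only [condExp_eq_sum_piecewise, this, ← sum_mul, sum_weight hw1, one_mul]

lemma mean_mul_eq_zero (hw1 : ∑ a, w a = 1) {U : Finset (Fin n)} {a b : (Fin n → Ω) → ℝ}
    (ha : condExp w U a = 0) (hb : DependsOn b U) : mean w (a * b) = 0 := by
  rw [← condExp_of_dependsOn hw1 hb, ← mean_condExp_mul, ha, zero_mul]
  simp [mean]

/-- `f_S = ∑_{T ⊆ S} (-1)^{|S \ T|} E[f | x_T]`; the exponent `#S + #T` has the parity of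
`|S \ T|` and avoids truncated subtraction. -/
noncomputable def efronStein (w : Ω → ℝ) (S : Finset (Fin n)) (f : (Fin n → Ω) → ℝ) :
    (Fin n → Ω) → ℝ :=
  ∑ T ∈ S.powerset, (-1 : ℝ) ^ (#S + #T) • condExp w T f

/-- The paper's `Δ_i f`. -/
noncomputable def laplacian (w : Ω → ℝ) (i : Fin n) (f : (Fin n → Ω) → ℝ) :
    (Fin n → Ω) → ℝ :=
  f - condExp w {i}ᶜ f

variable (w) in
lemma sum_powerset_efronStein (A : Finset (Fin n)) (f : (Fin n → Ω) → ℝ) :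
    ∑ S ∈ A.powerset, efronStein w S f = condExp w A f :=
  sum_powerset_sum_powerset_neg_one_pow_smul A fun T => condExp w T f

lemma sum_efronStein (hw1 : ∑ a, w a = 1) (f : (Fin n → Ω) → ℝ) :
    ∑ S, efronStein w S f = f := by
  rw [← powerset_univ, sum_powerset_efronStein,
    condExp_of_dependsOn hw1 (by simpa using dependsOn_univ f)]

variable (w) in
lemma efronStein_empty (f : (Fin n → Ω) → ℝ) :
    efronStein w ∅ f = fun _ => mean w f := by
  ext x
  simp [efronStein, condExp_eq_sum_piecewise, mean]

variable (w) in
lemma dependsOn_efronStein (S : Finset (Fin n)) (f : (Fin n → Ω) → ℝ) :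
    DependsOn (efronStein w S f) S := by
  intro x y hxy
  simp only [efronStein, Finset.sum_apply, Pi.smul_apply]
  exact sum_congr rfl fun T hT => congrArg _ <|
    (dependsOn_condExp T f).mono (by simpa using mem_powerset.mp hT) hxy

lemma condExp_compl_efronStein (hw1 : ∑ a, w a = 1) {S : Finset (Fin n)} {i : Fin n}
    (hi : i ∈ S) (f : (Fin n → Ω) → ℝ) : condExp w {i}ᶜ (efronStein w S f) = 0 := by
  rw [efronStein, sum_powerset_neg_one_pow_smul_of_mem hi, ← condExpₗ_apply, map_sum]
  refine sum_eq_zero fun T hT => ?_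
  have hiT : i ∉ T := fun h => notMem_erase i S (mem_powerset.mp hT h)
  have hT : ({i}ᶜ : Finset (Fin n)) ∩ T = T := by simpa
  have hiT' : ({i}ᶜ : Finset (Fin n)) ∩ insert i T = T := by ext; aesop
  rw [map_smul, map_sub, condExpₗ_apply, condExpₗ_apply, condExp_condExp hw1,
    condExp_condExp hw1, hT, hiT', sub_self, smul_zero]

lemma condExp_compl_efronStein_of_notMem (hw1 : ∑ a, w a = 1) {S : Finset (Fin n)} {i : Fin n}
    (hi : i ∉ S) (f : (Fin n → Ω) → ℝ) :
    condExp w {i}ᶜ (efronStein w S f) = efronStein w S f :=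
  condExp_of_dependsOn hw1 <| (dependsOn_efronStein w S f).mono <| by simpa using hi

lemma laplacian_eq_sum_efronStein (hw1 : ∑ a, w a = 1) (i : Fin n) (f : (Fin n → Ω) → ℝ) :
    laplacian w i f = ∑ S with i ∈ S, efronStein w S f := calc
  laplacian w i f = ∑ S, (efronStein w S f - condExp w {i}ᶜ (efronStein w S f)) := by
    rw [sum_sub_distrib, ← condExp_sum, sum_efronStein hw1]
    rfl
  _ = ∑ S, if i ∈ S then efronStein w S f else 0 := by
    refine sum_congr rfl fun S _ => ?_
    split_ifs with hi
    · rw [condExp_compl_efronStein hw1 hi, sub_zero]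
    · rw [condExp_compl_efronStein_of_notMem hw1 hi, sub_self]
  _ = ∑ S with i ∈ S, efronStein w S f := (sum_filter _ _).symm

lemma mean_efronStein_mul_efronStein (hw1 : ∑ a, w a = 1) {S T : Finset (Fin n)} (hST : S ≠ T)
    (f g : (Fin n → Ω) → ℝ) : mean w (efronStein w S f * efronStein w T g) = 0 := by
  have key : ∀ {S T : Finset (Fin n)} {i : Fin n} (f g : (Fin n → Ω) → ℝ), i ∈ S → i ∉ T →
      mean w (efronStein w S f * efronStein w T g) = 0 := fun f g hiS hiT =>
    mean_mul_eq_zero hw1 (condExp_compl_efronStein hw1 hiS f)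
      ((dependsOn_efronStein w _ g).mono (by simpa using hiT))
  obtain ⟨i, hiS, hiT⟩ | ⟨i, hiT, hiS⟩ : (∃ i ∈ S, i ∉ T) ∨ ∃ i ∈ T, i ∉ S := by
    by_contra! h
    exact hST (Subset.antisymm h.1 h.2)
  · exact key f g hiS hiT
  · rw [mul_comm]
    exact key g f hiT hiS

lemma mean_sum_efronStein_mul_sum_efronStein (hw1 : ∑ a, w a = 1)
    {P Q : Finset (Finset (Fin n))} (hPQ : P ⊆ Q) (f : (Fin n → Ω) → ℝ) :
    mean w ((∑ S ∈ P, efronStein w S f) * ∑ T ∈ Q, efronStein w T f) =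
      ∑ S ∈ P, mean w (efronStein w S f ^ 2) := by
  rw [sum_mul_sum, mean_sum]
  refine sum_congr rfl fun S hS => ?_
  rw [mean_sum, sum_eq_single_of_mem S (hPQ hS) fun T _ hTS =>
    mean_efronStein_mul_efronStein hw1 hTS.symm f f, sq]

lemma variance_eq_sum_efronStein (hw1 : ∑ a, w a = 1) (f : (Fin n → Ω) → ℝ) :
    mean w (f ^ 2) - mean w f ^ 2 = ∑ S ∈ univ.erase ∅, mean w (efronStein w S f ^ 2) := by
  have h := mean_sum_efronStein_mul_sum_efronStein hw1 (subset_refl univ) f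
  rw [sum_efronStein hw1, ← sq] at h
  rw [h, ← add_sum_erase _ _ (mem_univ ∅), efronStein_empty]
  simp [Pi.pow_def, mean_const hw1]

lemma mean_laplacian_sq (hw1 : ∑ a, w a = 1) (i : Fin n) (f : (Fin n → Ω) → ℝ) :
    mean w (laplacian w i f ^ 2) = ∑ S with i ∈ S, mean w (efronStein w S f ^ 2) := by
  rw [sq, laplacian_eq_sum_efronStein hw1,
    mean_sum_efronStein_mul_sum_efronStein hw1 (subset_refl _)]

lemma mean_mul_sq_le (hw : ∀ a, 0 ≤ w a) (u v : (Fin n → Ω) → ℝ) :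
    mean w (u * v) ^ 2 ≤ mean w (u ^ 2) * mean w (v ^ 2) :=
  sum_sq_le_sum_mul_sum_of_sq_le_mul _ (fun x _ => mul_nonneg (weight_nonneg hw x) (sq_nonneg _))
    (fun x _ => mul_nonneg (weight_nonneg hw x) (sq_nonneg _)) fun x _ => le_of_eq (by
      simp only [Pi.mul_apply, Pi.pow_apply]; ring)

lemma sum_mul_mean_comp_update (hw1 : ∑ a, w a = 1) (j : Fin n) (φ : (Fin n → Ω) → ℝ) :
    ∑ a, w a * mean w (fun x => φ (Function.update x j a)) = mean w φ := by
  let σ : Ω × (Fin n → Ω) → Ω × (Fin n → Ω) := fun p => (p.2 j, Function.update p.2 j p.1)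
  have hσ : Function.Involutive σ := by
    rintro ⟨a, x⟩
    simp [σ]
  calc ∑ a, w a * mean w (fun x => φ (Function.update x j a))
      = ∑ p : Ω × (Fin n → Ω), w p.1 * weight w p.2 * φ (Function.update p.2 j p.1) := by
        simp only [mean, Fintype.sum_prod_type, mul_sum, mul_assoc]
    _ = ∑ p : Ω × (Fin n → Ω), w p.1 * weight w p.2 * φ p.2 :=
        Fintype.sum_bijective σ hσ.bijective _ _ fun p => by simp only [σ, weight_update]
    _ = mean w φ := by
        simp only [Fintype.sum_prod_type, mul_assoc, ← mul_sum, ← sum_mul, hw1, one_mul, mean]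

lemma condExp_laplacian (hw1 : ∑ a, w a = 1) (i : Fin n) (f : (Fin n → Ω) → ℝ) :
    condExp w {i}ᶜ (laplacian w i f) = 0 := by
  rw [laplacian, ← condExpₗ_apply, map_sub]
  simp [condExp_condExp hw1]

lemma dependsOn_laplacian {A : Finset (Fin n)} {g : (Fin n → Ω) → ℝ} (hg : DependsOn g A)
    (i : Fin n) : DependsOn (laplacian w i g) A := fun x y hxy => by
  simp only [laplacian, Pi.sub_apply, hg hxy, (hg.condExp {i}ᶜ).mono Set.inter_subset_right hxy]

end

variable (Ω) in
/-- Degree `≤ d` in the coordinates `J`, encoded as a span of juntas so that it is visibly stable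
under `E[· | x_{≠j}]` and under fixing a coordinate. -/
def lowDegree (J : Finset (Fin n)) (d : ℕ) : Submodule ℝ ((Fin n → Ω) → ℝ) :=
  Submodule.span ℝ {g | ∃ A ⊆ J, #A ≤ d ∧ DependsOn g (A : Set (Fin n))}

lemma mem_lowDegree_of_dependsOn {J A : Finset (Fin n)} {d : ℕ} {g : (Fin n → Ω) → ℝ}
    (hAJ : A ⊆ J) (hA : #A ≤ d) (hg : DependsOn g A) : g ∈ lowDegree Ω J d :=
  Submodule.subset_span ⟨A, hAJ, hA, hg⟩

lemma map_mem_lowDegree {J J' : Finset (Fin n)} {d d' : ℕ}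
    (L : ((Fin n → Ω) → ℝ) →ₗ[ℝ] (Fin n → Ω) → ℝ)
    (hL : ∀ g A, A ⊆ J → #A ≤ d → DependsOn g (A : Set (Fin n)) → L g ∈ lowDegree Ω J' d')
    {f : (Fin n → Ω) → ℝ} (hf : f ∈ lowDegree Ω J d) : L f ∈ lowDegree Ω J' d' :=
  (Submodule.span_le (p := (lowDegree Ω J' d').comap L)).mpr
    (by rintro g ⟨A, hAJ, hA, hg⟩; exact hL g A hAJ hA hg) hf

lemma dependsOn_empty_of_mem_lowDegree {J : Finset (Fin n)} {d : ℕ} {f : (Fin n → Ω) → ℝ}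
    (hf : f ∈ lowDegree Ω J d) (hJd : J = ∅ ∨ d = 0) : DependsOn f ∅ := by
  induction hf using Submodule.span_induction with
  | mem g hg =>
    obtain ⟨A, hAJ, hA, hg⟩ := hg
    obtain rfl : A = ∅ := by
      rcases hJd with rfl | rfl
      · exact subset_empty.mp hAJ
      · exact card_eq_zero.mp (Nat.le_zero.mp hA)
    simpa using hg
  | zero => exact fun _ _ _ => rfl
  | add g h _ _ hg hh => exact fun x y hxy => by simp [hg hxy, hh hxy]
  | smul c g _ hg => exact fun x y hxy => by simp [hg hxy]

variable [Fintype Ω]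

lemma condExp_compl_mem_lowDegree {J : Finset (Fin n)} {d : ℕ} {f : (Fin n → Ω) → ℝ}
    (hf : f ∈ lowDegree Ω J d) (j : Fin n) : condExp w {j}ᶜ f ∈ lowDegree Ω (J.erase j) d := by
  refine map_mem_lowDegree (condExpₗ w {j}ᶜ) (fun g A hAJ hA hg => ?_) hf
  refine mem_lowDegree_of_dependsOn (erase_subset_erase j hAJ) ((card_erase_le).trans hA) ?_
  simpa [Set.inter_comm, Set.sdiff_eq_compl_inter] using hg.condExp (w := w) {j}ᶜ

lemma laplacian_comp_update_mem_lowDegree (hw1 : ∑ a, w a = 1) {J : Finset (Fin n)} {d : ℕ}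
    {f : (Fin n → Ω) → ℝ} (hf : f ∈ lowDegree Ω J (d + 1)) (j : Fin n) (a : Ω) :
    (fun x => laplacian w j f (Function.update x j a)) ∈ lowDegree Ω (J.erase j) d := by
  let L := LinearMap.funLeft ℝ ℝ (fun x : Fin n → Ω => Function.update x j a) ∘ₗ
    (LinearMap.id - condExpₗ w {j}ᶜ)
  refine map_mem_lowDegree L (fun g A hAJ hA hg => ?_) hf
  by_cases hjA : j ∈ A
  · refine mem_lowDegree_of_dependsOn (erase_subset_erase j hAJ) ?_
      ((dependsOn_laplacian hg j).update j a)
    rw [card_erase_of_mem hjA]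
    omega
  · have : laplacian w j g = 0 :=
      sub_eq_zero.mpr (condExp_of_dependsOn hw1 (hg.mono (by simpa using hjA))).symm
    have hL : L g = fun x => laplacian w j g (Function.update x j a) := rfl
    rw [hL, this]
    exact zero_mem _

lemma mean_pow_four_eq_of_dependsOn_empty (hw1 : ∑ a, w a = 1) {f : (Fin n → Ω) → ℝ}
    (hf : DependsOn f ∅) : mean w (f ^ 4) = mean w (f ^ 2) ^ 2 := by
  have hc : ∀ x, mean w (f ^ 2) = f x ^ 2 := fun x => by
    simp only [mean, Pi.pow_apply, fun y => hf.empty y x, ← sum_mul, sum_weight hw1, one_mul]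
  calc mean w (f ^ 4) = ∑ x, weight w x * mean w (f ^ 2) ^ 2 :=
        sum_congr rfl fun x _ => by rw [hc x, Pi.pow_apply]; ring
    _ = mean w (f ^ 2) ^ 2 := by rw [← sum_mul, sum_weight hw1, one_mul]

lemma mean_pow_four_le_of_comp_update (hw1 : ∑ a, w a = 1) {μ c : ℝ} (hμ : 0 < μ)
    (hμw : ∀ a, μ ≤ w a) (hc : 0 ≤ c) (j : Fin n) {h : (Fin n → Ω) → ℝ}
    (hslice : ∀ a, mean w ((fun x => h (Function.update x j a)) ^ 4) ≤
      c * mean w ((fun x => h (Function.update x j a)) ^ 2) ^ 2) :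
    mean w (h ^ 4) ≤ c / μ * mean w (h ^ 2) ^ 2 := by
  have hw : ∀ a, 0 ≤ w a := fun a => hμ.le.trans (hμw a)
  have hpow : ∀ (k : ℕ) a, (fun x => h (Function.update x j a)) ^ k =
      fun x => (h ^ k) (Function.update x j a) := fun k a => by ext; simp
  simp only [hpow] at hslice
  set q := fun a => mean w (fun x => (h ^ 2) (Function.update x j a))
  have hq : ∀ a, 0 ≤ q a := fun a => mean_nonneg hw fun x => sq_nonneg (h _)
  have hsum : ∑ a, w a * q a = mean w (h ^ 2) := sum_mul_mean_comp_update hw1 j (h ^ 2)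
  have hμq : ∀ a, μ * q a ≤ mean w (h ^ 2) := fun a => calc
    μ * q a ≤ w a * q a := mul_le_mul_of_nonneg_right (hμw a) (hq a)
    _ ≤ ∑ b, w b * q b := single_le_sum (fun b _ => mul_nonneg (hw b) (hq b)) (mem_univ a)
    _ = mean w (h ^ 2) := hsum
  calc mean w (h ^ 4) = ∑ a, w a * mean w (fun x => (h ^ 4) (Function.update x j a)) :=
        (sum_mul_mean_comp_update hw1 j (h ^ 4)).symm
    _ ≤ ∑ a, w a * (c / μ * mean w (h ^ 2) * q a) := by
        refine sum_le_sum fun a _ => mul_le_mul_of_nonneg_left ((hslice a).trans ?_) (hw a)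
        calc c * q a ^ 2 = c * q a * q a := by ring
          _ ≤ c * q a * (mean w (h ^ 2) / μ) :=
            mul_le_mul_of_nonneg_left ((le_div_iff₀' hμ).mpr (hμq a)) (mul_nonneg hc (hq a))
          _ = c / μ * mean w (h ^ 2) * q a := by ring
    _ = c / μ * mean w (h ^ 2) ^ 2 := by
        simp_rw [mul_left_comm (w _), ← mul_sum, hsum]
        ring

lemma mean_add_pow_four_le (hw : ∀ a, 0 ≤ w a) {K : ℝ} (hK : 0 ≤ K) {g h : (Fin n → Ω) → ℝ}
    (hgh : mean w (g * h) = 0) (hg3h : mean w (g ^ 3 * h) = 0)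
    (hg : mean w (g ^ 4) ≤ K * mean w (g ^ 2) ^ 2)
    (hh : 16 * mean w (h ^ 4) ≤ K * mean w (h ^ 2) ^ 2) :
    mean w ((g + h) ^ 4) ≤ K * mean w ((g + h) ^ 2) ^ 2 := by
  set p := mean w (g ^ 2)
  set q := mean w (h ^ 2)
  set X := mean w (g ^ 2 * h ^ 2)
  have hp : 0 ≤ p := mean_sq_nonneg hw _
  have hq : 0 ≤ q := mean_sq_nonneg hw _
  have hX : 0 ≤ X := mean_nonneg hw fun x => show 0 ≤ g x ^ 2 * h x ^ 2 by positivity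
  have hh4 : 0 ≤ mean w (h ^ 4) := mean_nonneg hw fun x => show 0 ≤ h x ^ 4 by positivity
  have hsq : mean w ((g + h) ^ 2) = p + q := by
    rw [show (g + h) ^ 2 = g ^ 2 + (2 : ℝ) • (g * h) + h ^ 2 by ext x; simp; ring, mean_add,
      mean_add, mean_smul, hgh, mul_zero, add_zero]
  -- the right side minus the left side is `2 h² (g - h)²`
  have hpt : (g + h) ^ 4 ≤
      g ^ 4 + (4 : ℝ) • (g ^ 3 * h) + (8 : ℝ) • (g ^ 2 * h ^ 2) + (3 : ℝ) • h ^ 4 := fun x => by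
    simp only [Pi.add_apply, Pi.pow_apply, Pi.smul_apply, Pi.mul_apply, smul_eq_mul]
    nlinarith [mul_nonneg (sq_nonneg (h x)) (sq_nonneg (g x - h x))]
  have hXsq : X ^ 2 ≤ (K * p * q / 4) ^ 2 := calc
    X ^ 2 ≤ mean w (g ^ 4) * mean w (h ^ 4) := by
      have := mean_mul_sq_le hw (g ^ 2) (h ^ 2)
      rwa [← pow_mul, ← pow_mul] at this
    _ ≤ (K * p ^ 2) * (K * q ^ 2 / 16) :=
      mul_le_mul hg (by linarith) hh4 (by positivity)
    _ = (K * p * q / 4) ^ 2 := by ring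
  have hX' : X ≤ K * p * q / 4 := (pow_le_pow_iff_left₀ hX (by positivity) two_ne_zero).mp hXsq
  calc mean w ((g + h) ^ 4)
      ≤ mean w (g ^ 4) + 4 * mean w (g ^ 3 * h) + 8 * X + 3 * mean w (h ^ 4) := by
        simpa only [mean_add, mean_smul] using mean_mono hw hpt
    _ ≤ K * mean w ((g + h) ^ 2) ^ 2 := by
        rw [hsq, hg3h]
        nlinarith

theorem mean_pow_four_le_of_mem_lowDegree (hw1 : ∑ a, w a = 1) {μ : ℝ} (hμ : 0 < μ)
    (hμw : ∀ a, μ ≤ w a) {J : Finset (Fin n)} {d : ℕ} {f : (Fin n → Ω) → ℝ}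
    (hf : f ∈ lowDegree Ω J d) : mean w (f ^ 4) ≤ (16 / μ) ^ d * mean w (f ^ 2) ^ 2 := by
  have hw : ∀ a, 0 ≤ w a := fun a => hμ.le.trans (hμw a)
  induction J using Finset.strongInduction generalizing d f with
  | H J ih =>
  by_cases hJd : J = ∅ ∨ d = 0
  · have hμ1 : μ ≤ 1 := by
      obtain ⟨a⟩ : Nonempty Ω := by
        by_contra h
        simp [not_nonempty_iff.mp h] at hw1
      exact (hμw a).trans (hw1 ▸ single_le_sum (fun b _ => hw b) (mem_univ a))
    rw [mean_pow_four_eq_of_dependsOn_empty hw1 (dependsOn_empty_of_mem_lowDegree hf hJd)]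
    refine le_mul_of_one_le_left (sq_nonneg _) (one_le_pow₀ ?_)
    rw [le_div_iff₀ hμ]
    linarith
  push Not at hJd
  obtain ⟨j, hj⟩ := hJd.1
  obtain ⟨d, rfl⟩ := Nat.exists_eq_succ_of_ne_zero hJd.2
  have hdep : DependsOn (condExp w {j}ᶜ f) _ := dependsOn_condExp {j}ᶜ f
  have hslices := fun a => ih _ (erase_ssubset hj) (laplacian_comp_update_mem_lowDegree hw1 hf j a)
  rw [show f = condExp w {j}ᶜ f + laplacian w j f by simp [laplacian]]
  refine mean_add_pow_four_le hw (by positivity) ?_ ?_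
    (ih _ (erase_ssubset hj) (condExp_compl_mem_lowDegree hf j)) ?_
  · rw [mul_comm]
    exact mean_mul_eq_zero hw1 (condExp_laplacian hw1 j f) hdep
  · rw [mul_comm]
    exact mean_mul_eq_zero hw1 (condExp_laplacian hw1 j f) fun x y hxy => by
      simp only [Pi.pow_apply, hdep hxy]
  · have := mean_pow_four_le_of_comp_update hw1 hμ hμw (by positivity) j hslices
    rw [pow_succ]
    calc 16 * mean w (laplacian w j f ^ 4)
        ≤ 16 * ((16 / μ) ^ d / μ * mean w (laplacian w j f ^ 2) ^ 2) := by linarith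
      _ = (16 / μ) ^ d * (16 / μ) * mean w (laplacian w j f ^ 2) ^ 2 := by ring

lemma mean_mul_pow_four_le (hw : ∀ a, 0 ≤ w a) (a u : (Fin n → Ω) → ℝ) :
    mean w (a * u) ^ 4 ≤ mean w |a| ^ 2 * mean w (a ^ 2) * mean w (u ^ 4) := by
  have h1 : mean w (a * u) ^ 2 ≤ mean w |a| * mean w (|a| * u ^ 2) :=
    sum_sq_le_sum_mul_sum_of_sq_le_mul _
      (fun x _ => mul_nonneg (weight_nonneg hw x) (abs_nonneg (a x)))
      (fun x _ => mul_nonneg (weight_nonneg hw x) (mul_nonneg (abs_nonneg (a x)) (sq_nonneg _)))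
      fun x _ => le_of_eq (by
        simp only [Pi.mul_apply, Pi.pow_apply, Pi.abs_apply]
        linear_combination (-(weight w x ^ 2 * u x ^ 2)) * sq_abs (a x))
  have h2 : mean w (|a| * u ^ 2) ^ 2 ≤ mean w (a ^ 2) * mean w (u ^ 4) := by
    have habs : |a| ^ 2 = a ^ 2 := by ext x; simp
    have := mean_mul_sq_le hw |a| (u ^ 2)
    rwa [habs, ← pow_mul] at this
  calc mean w (a * u) ^ 4 = (mean w (a * u) ^ 2) ^ 2 := by ring
    _ ≤ (mean w |a| * mean w (|a| * u ^ 2)) ^ 2 :=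
      pow_le_pow_left₀ (sq_nonneg _) h1 2
    _ = mean w |a| ^ 2 * mean w (|a| * u ^ 2) ^ 2 := by ring
    _ ≤ mean w |a| ^ 2 * (mean w (a ^ 2) * mean w (u ^ 4)) :=
      mul_le_mul_of_nonneg_left h2 (sq_nonneg _)
    _ = _ := by ring

lemma sq_sum_mean_efronStein_sq_le (hw1 : ∑ a, w a = 1) {μ : ℝ} (hμ : 0 < μ)
    (hμw : ∀ a, μ ≤ w a) (i : Fin n) (d : ℕ) (f : (Fin n → Ω) → ℝ) :
    (∑ S with i ∈ S ∧ #S ≤ d, mean w (efronStein w S f ^ 2)) ^ 2 ≤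
      (16 / μ) ^ d * mean w |laplacian w i f| ^ 2 * mean w (laplacian w i f ^ 2) := by
  have hw : ∀ a, 0 ≤ w a := fun a => hμ.le.trans (hμw a)
  set u := ∑ S with i ∈ S ∧ #S ≤ d, efronStein w S f
  set M := ∑ S with i ∈ S ∧ #S ≤ d, mean w (efronStein w S f ^ 2)
  have hM : 0 ≤ M := sum_nonneg fun S _ => mean_sq_nonneg hw _
  have hMu : mean w (u ^ 2) = M := by
    rw [sq]
    exact mean_sum_efronStein_mul_sum_efronStein hw1 subset_rfl f
  have hMΔ : mean w (laplacian w i f * u) = M := by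
    rw [laplacian_eq_sum_efronStein hw1, mul_comm]
    exact mean_sum_efronStein_mul_sum_efronStein hw1 (monotone_filter_right _ fun _ _ h => h.1) f
  have hu : u ∈ lowDegree Ω univ d := Submodule.sum_mem _ fun S hS =>
    mem_lowDegree_of_dependsOn (subset_univ S) (mem_filter.mp hS).2.2 (dependsOn_efronStein w S f)
  have h4 := mean_pow_four_le_of_mem_lowDegree hw1 hμ hμw hu
  have hHolder := mean_mul_pow_four_le hw (laplacian w i f) u
  rw [hMu] at h4
  rw [hMΔ] at hHolder
  set C := (16 / μ) ^ d * mean w |laplacian w i f| ^ 2 * mean w (laplacian w i f ^ 2)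
  have hC : M ^ 2 * M ^ 2 ≤ M ^ 2 * C := calc
    M ^ 2 * M ^ 2 = M ^ 4 := by ring
    _ ≤ mean w |laplacian w i f| ^ 2 * mean w (laplacian w i f ^ 2) * ((16 / μ) ^ d * M ^ 2) :=
      hHolder.trans (mul_le_mul_of_nonneg_left h4
        (mul_nonneg (sq_nonneg _) (mean_sq_nonneg hw _)))
    _ = M ^ 2 * C := by ring
  rcases hM.eq_or_lt with hM0 | hM0
  · rw [← hM0, sq, zero_mul]
    exact mul_nonneg (mul_nonneg (by positivity) (sq_nonneg _))
      (mean_sq_nonneg hw _)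
  · exact le_of_mul_le_mul_left hC (pow_pos hM0 2)

lemma le_half_of_laplacian_ne_zero (hw : ∀ a, 0 ≤ w a) (hw1 : ∑ a, w a = 1) {μ : ℝ}
    (hμw : ∀ a, μ ≤ w a) {i : Fin n} {f : (Fin n → Ω) → ℝ} (hf : laplacian w i f ≠ 0) :
    μ ≤ 1 / 2 := by
  classical
  obtain ⟨a, b, hab⟩ : ∃ a b : Ω, a ≠ b := by
    by_contra! hΩ
    have : Subsingleton (Fin n → Ω) := ⟨fun x y => funext fun j => hΩ (x j) (y j)⟩
    exact hf <| sub_eq_zero.mpr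
      (condExp_of_dependsOn hw1 fun x y _ => congrArg f (Subsingleton.elim x y)).symm
  have hpair := sum_le_univ_sum_of_nonneg (s := {a, b}) hw
  rw [sum_pair hab, hw1] at hpair
  linarith [hμw a, hμw b]

end EfronStein

lemma le_two_mul_sq_div_log {M a b : ℝ} (ha : 0 < a) (hab : a < b) (hM : 0 ≤ M)
    (hM2 : M ^ 2 ≤ a * b ^ 3) : M ≤ 2 * b ^ 2 / Real.log (b / a) := by
  have hb : 0 < b := ha.trans hab
  have ht : 0 < Real.log (b / a) := Real.log_pos ((one_lt_div ha).mpr hab)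
  -- `t² ≤ 4 exp t` for `t = log (b/a)`
  have ht2 : Real.log (b / a) ^ 2 ≤ 4 * (b / a) := by
    conv_rhs => rw [← Real.exp_log (div_pos hb ha)]
    nlinarith [Real.quadratic_le_exp_of_nonneg ht.le]
  rw [le_div_iff₀ ht]
  refine (pow_le_pow_iff_left₀ (by positivity) (by positivity) two_ne_zero).mp ?_
  calc (M * Real.log (b / a)) ^ 2 = M ^ 2 * Real.log (b / a) ^ 2 := by ring
    _ ≤ a * b ^ 3 * (4 * (b / a)) := by gcongr
    _ = (2 * b ^ 2) ^ 2 := by field_simp; ring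

lemma exists_level_bound {μ a b : ℝ} (hμ : 0 < μ) (hμ2 : μ ≤ 1 / 2) (ha : 0 < a) (hab : a < b) :
    ∃ d : ℕ, ∀ M : ℝ, 0 ≤ M → M ^ 2 ≤ (16 / μ) ^ d * a ^ 2 * b ^ 2 →
      M + b ^ 2 / (d + 1) ≤ 8 * Real.log (1 / μ) * (b ^ 2 / Real.log (b / a)) := by
  have hb : 0 < b := ha.trans hab
  have ht : 0 < Real.log (b / a) := Real.log_pos ((one_lt_div ha).mpr hab)
  have hlog2 : Real.log 2 ≤ Real.log (1 / μ) :=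
    Real.log_le_log two_pos (by rw [le_div_iff₀ hμ]; linarith)
  have hL : Real.log (16 / μ) = 4 * Real.log 2 + Real.log (1 / μ) := by
    rw [show 16 / μ = 2 ^ 4 * (1 / μ) by ring, Real.log_mul (by norm_num) (by positivity),
      Real.log_pow]
    push_cast
    ring
  have hL0 : 0 < Real.log (16 / μ) := by linarith [Real.log_two_gt_d9]
  refine ⟨⌊Real.log (b / a) / Real.log (16 / μ)⌋₊, fun M hM hM2 => ?_⟩
  set t := Real.log (b / a)
  set L := Real.log (16 / μ)
  set d := ⌊t / L⌋₊
  have hdL : d * L ≤ t := (le_div_iff₀ hL0).mp (Nat.floor_le (by positivity))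
  have hdL' : t < (d + 1) * L := (div_lt_iff₀ hL0).mp (Nat.lt_floor_add_one _)
  have hK : (16 / μ) ^ d ≤ b / a := by
    rw [← Real.exp_log (by positivity : (0 : ℝ) < 16 / μ), ← Real.exp_nat_mul,
      ← Real.exp_log (div_pos hb ha)]
    exact Real.exp_le_exp.mpr hdL
  have hlow : M ≤ 2 * b ^ 2 / t := le_two_mul_sq_div_log ha hab hM <| hM2.trans <| by
    calc (16 / μ) ^ d * a ^ 2 * b ^ 2 ≤ b / a * a ^ 2 * b ^ 2 := by gcongr
      _ = a * b ^ 3 := by field_simp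
  have hhigh : b ^ 2 / (d + 1) ≤ L * b ^ 2 / t := by
    rw [div_le_div_iff₀ (by positivity) ht]
    nlinarith [sq_nonneg b]
  calc M + b ^ 2 / (d + 1) ≤ 2 * b ^ 2 / t + L * b ^ 2 / t := add_le_add hlow hhigh
    _ = (2 + L) * b ^ 2 / t := by ring
    _ ≤ 8 * Real.log (1 / μ) * b ^ 2 / t := by
      gcongr
      linarith [Real.log_two_gt_d9]
    _ = 8 * Real.log (1 / μ) * (b ^ 2 / t) := by ring

lemma sum_erase_empty_le {ι : Type*} [Fintype ι] [DecidableEq ι] (ν : Finset ι → ℝ)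
    (hν : ∀ S, 0 ≤ ν S) (d : ι → ℕ) :
    ∑ S ∈ univ.erase ∅, ν S ≤
      ∑ i, (∑ S with i ∈ S ∧ #S ≤ d i, ν S + (∑ S with i ∈ S, ν S) / (d i + 1)) := by
  set F : ι → Finset ι → ℝ := fun i S => (if #S ≤ d i then ν S else 0) + ν S / (d i + 1)
  have hF : ∀ i S, 0 ≤ F i S := fun i S => by
    have := hν S
    simp only [F]
    split_ifs <;> positivity
  have hsingle : ∀ S : Finset ι, S.Nonempty → ν S ≤ ∑ i ∈ S, F i S := by
    intro S hS
    by_cases h : ∃ i ∈ S, #S ≤ d i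
    · obtain ⟨i, hi, hid⟩ := h
      calc ν S ≤ F i S := by
            simp only [F, if_pos hid]
            linarith [div_nonneg (hν S) (by positivity : (0 : ℝ) ≤ d i + 1)]
        _ ≤ ∑ i ∈ S, F i S := single_le_sum (fun j _ => hF j S) hi
    · push Not at h
      calc ν S = ∑ _i ∈ S, ν S / #S := by
            rw [sum_const, nsmul_eq_mul]
            field_simp [hS.card_pos.ne']
        _ ≤ ∑ i ∈ S, F i S := sum_le_sum fun i hi => by
            simp only [F, if_neg (h i hi).not_ge, zero_add]
            exact div_le_div_of_nonneg_left (hν S) (by positivity) (by exact_mod_cast h i hi)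
  calc ∑ S ∈ univ.erase ∅, ν S ≤ ∑ S ∈ univ.erase ∅, ∑ i ∈ S, F i S :=
        sum_le_sum fun S hS => hsingle S (nonempty_iff_ne_empty.mpr (ne_of_mem_erase hS))
    _ ≤ ∑ S, ∑ i ∈ S, F i S :=
        sum_le_sum_of_subset_of_nonneg (erase_subset _ _) fun S _ _ => sum_nonneg fun i _ => hF i S
    _ = ∑ i, ∑ S with i ∈ S, F i S := by
        simp only [sum_filter]
        rw [sum_comm]
        simp [sum_ite_mem]
    _ = _ := by
        refine sum_congr rfl fun i _ => ?_
        simp only [F, sum_add_distrib, sum_div, filter_filter, sum_ite, sum_const_zero, add_zero]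

open EfronStein in
/-- Generalization of Talagrand's theorem. There is a universal constant
`C > 0` such that for any finite probability space `(Ω, μ)` with minimal atom probability
`μ*` and any `f : Ω^n → ℝ`, writing `Δ_i f = f - E[f | X_j, j ≠ i]`
(which equals `Σ_{S ∋ i} f_S` for the Efron-Stein decomposition), if each `Δ_i f` is
nonzero with `‖Δ_i f‖₂ > ‖Δ_i f‖₁` then
`Var(f) ≤ C·log(1/μ*)·Σ_i ‖Δ_i f‖₂² / log(‖Δ_i f‖₂/‖Δ_i f‖₁)`. -/
theorem talagrand_generalization :
    ∃ C : ℝ, 0 < C ∧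
      ∀ (n : ℕ) (Ω : Type) [Fintype Ω] [Nonempty Ω] (w : Ω → ℝ),
        (∀ a, 0 < w a) → (∑ a, w a = 1) →
        ∀ f : (Fin n → Ω) → ℝ,
          let μstar := Finset.univ.inf' Finset.univ_nonempty w
          let W : (Fin n → Ω) → ℝ := fun x => ∏ i, w (x i)
          let Δ : Fin n → (Fin n → Ω) → ℝ := fun i x => f x - condExp w ({i}ᶜ) f x
          ∀ l1 l2 : Fin n → ℝ,
            (∀ i, l1 i = ∑ x, W x * |Δ i x|) →
            (∀ i, l2 i = (∑ x, W x * (Δ i x) ^ 2) ^ (1 / 2 : ℝ)) →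
            (∀ i, 0 < l1 i) → (∀ i, l1 i < l2 i) →
            (∑ x, W x * (f x) ^ 2) - (∑ x, W x * f x) ^ 2 ≤
              C * Real.log (1 / μstar) *
                ∑ i, (l2 i) ^ 2 / Real.log (l2 i / l1 i) := by
  refine ⟨8, by norm_num, ?_⟩
  intro n Ω _ _ w hw hw1 f μstar W Δ l1 l2 hl1 hl2 hl1pos hl12
  have hw0 : ∀ a, 0 ≤ w a := fun a => (hw a).le
  have hμ : 0 < μstar := (lt_inf'_iff _).mpr fun a _ => hw a
  have hμw : ∀ a, μstar ≤ w a := fun a => inf'_le w (mem_univ a)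
  have hvar : (∑ x, W x * f x ^ 2) - (∑ x, W x * f x) ^ 2 = mean w (f ^ 2) - mean w f ^ 2 := by
    simp only [mean, weight, Pi.pow_apply, W]
  have hl1' : ∀ i, l1 i = mean w |laplacian w i f| := fun i => by
    simp only [hl1 i, mean, weight, laplacian, Pi.abs_apply, Pi.sub_apply, W, Δ]
  have hl2' : ∀ i, l2 i ^ 2 = mean w (laplacian w i f ^ 2) := fun i => by
    have hsum : ∑ x, W x * Δ i x ^ 2 = mean w (laplacian w i f ^ 2) := by
      simp only [mean, weight, laplacian, Pi.pow_apply, Pi.sub_apply, W, Δ]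
    rw [hl2 i, hsum, ← Real.sqrt_eq_rpow, Real.sq_sqrt (mean_sq_nonneg hw0 _)]
  have hμ2 (i : Fin n) : μstar ≤ 1 / 2 :=
    le_half_of_laplacian_ne_zero (i := i) (f := f) hw0 hw1 hμw fun h0 =>
      (hl1pos i).ne' (by simp [hl1' i, h0, mean])
  choose d hd using fun i => exists_level_bound hμ (hμ2 i) (hl1pos i) (hl12 i)
  have hlevel (i : Fin n) : ∑ S with i ∈ S ∧ #S ≤ d i, mean w (efronStein w S f ^ 2) +
      (∑ S with i ∈ S, mean w (efronStein w S f ^ 2)) / (d i + 1) ≤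
        8 * Real.log (1 / μstar) * (l2 i ^ 2 / Real.log (l2 i / l1 i)) := by
    rw [← mean_laplacian_sq hw1, ← hl2' i]
    refine hd i _ (sum_nonneg fun S _ => mean_sq_nonneg hw0 _) ?_
    rw [hl1', hl2']
    exact sq_sum_mean_efronStein_sq_le hw1 hμ hμw i (d i) f
  rw [hvar, variance_eq_sum_efronStein hw1, mul_sum]
  exact (sum_erase_empty_le _ (fun S => mean_sq_nonneg hw0 _) d).trans
    (sum_le_sum fun i _ => hlevel i)
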